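/- arXiv:2302.13023 — 4 statements merged into one kernel-verified Lean document; each statement's English description precedes it below -/
import Mathlib

section
/- Let Q be an A-valued quadratic form on Λ satisfying strict invariance b(α,λ) = ⟨α̌,λ⟩·Q(α) for all coroots α. Then Q vanishes on the subgroup Λ^{♯,r} generated by the elements n_α·α (where n_α = ord Q(α)), and therefore the restriction of Q to Λ^♯ descends to a well-defined group homomorphism Λ^♯/Λ^{♯,r} → A. -/
/-!
The elements `x` with `Q x = 0` and `b x = 0` form a subgroup: on the radical of `b` the
polarisation identity makes `Q` additive, and `Q (-x) = Q x`. Each generator `n_α • α` lies in it,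
since `Q (n_α • α) = n_α² • Q α = 0` and, by strict invariance,
`b (n_α • α) μ = n_α • ⟨α̌, μ⟩ • Q α = 0`. Additivity of `Q` on `Λ^♯` is polarisation again.
-/

section QuadraticForm

variable {Λ A : Type*} [AddCommGroup Λ] [AddCommGroup A] {Q : Λ → A} {b : Λ → Λ → A}

theorem map_add_of_polar_eq_zero (hb : ∀ l m : Λ, b l m = Q (l + m) - Q l - Q m) {l m : Λ}
    (hlm : b l m = 0) : Q (l + m) = Q l + Q m := by
  rw [hb, sub_sub, sub_eq_zero] at hlm
  exact hlm

def polarLeft (hbadd : ∀ l₁ l₂ m : Λ, b (l₁ + l₂) m = b l₁ m + b l₂ m) (μ : Λ) : Λ →+ A :=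
  AddMonoidHom.mk' (b · μ) (hbadd · · μ)

def isotropicRadical (hQ : ∀ (n : ℤ) (l : Λ), Q (n • l) = n ^ 2 • Q l)
    (hb : ∀ l m : Λ, b l m = Q (l + m) - Q l - Q m)
    (hbadd : ∀ l₁ l₂ m : Λ, b (l₁ + l₂) m = b l₁ m + b l₂ m) : AddSubgroup Λ where
  carrier := {x | Q x = 0 ∧ ∀ μ, b x μ = 0}
  zero_mem' := ⟨by simpa using hQ 0 0, fun μ => (polarLeft hbadd μ).map_zero⟩
  add_mem' := by
    rintro x y ⟨hQx, hbx⟩ ⟨hQy, hby⟩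
    refine ⟨?_, fun μ => ?_⟩
    · rw [map_add_of_polar_eq_zero hb (hbx y), hQx, hQy, add_zero]
    · rw [hbadd, hbx, hby, add_zero]
  neg_mem' := by
    rintro x ⟨hQx, hbx⟩
    refine ⟨?_, fun μ => ?_⟩
    · simpa [hQx] using hQ (-1) x
    · change polarLeft hbadd μ (-x) = 0
      rw [map_neg, neg_eq_zero]
      exact hbx μ

theorem addOrderOf_zsmul_mem_isotropicRadical (hQ : ∀ (n : ℤ) (l : Λ), Q (n • l) = n ^ 2 • Q l)
    (hb : ∀ l m : Λ, b l m = Q (l + m) - Q l - Q m)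
    (hbadd : ∀ l₁ l₂ m : Λ, b (l₁ + l₂) m = b l₁ m + b l₂ m) {α : Λ} {d : Λ →+ ℤ}
    (hstrict : ∀ l : Λ, b α l = d l • Q α) :
    (addOrderOf (Q α) : ℤ) • α ∈ isotropicRadical hQ hb hbadd := by
  have hord : (addOrderOf (Q α) : ℤ) • Q α = 0 := by
    rw [natCast_zsmul, addOrderOf_nsmul_eq_zero]
  refine ⟨by rw [hQ, sq, mul_smul, hord, smul_zero], fun μ => ?_⟩
  change polarLeft hbadd μ _ = 0
  rw [map_zsmul, polarLeft, AddMonoidHom.mk'_apply, hstrict, smul_comm, hord, smul_zero]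

end QuadraticForm

theorem stmt2_general {Λ A : Type*} [AddCommGroup Λ] [AddCommGroup A]
    (Q : Λ → A)
    (hQ : ∀ (n : ℤ) (l : Λ), Q (n • l) = n ^ 2 • Q l)
    (b : Λ → Λ → A)
    (hb : ∀ l m : Λ, b l m = Q (l + m) - Q l - Q m)
    (hbadd : ∀ l₁ l₂ m : Λ, b (l₁ + l₂) m = b l₁ m + b l₂ m)
    (Φ : Set Λ) (d : Λ → Λ →+ ℤ)
    (hstrict : ∀ α ∈ Φ, ∀ l : Λ, b α l = d α l • Q α) :
    (∀ x ∈ AddSubgroup.closure {x : Λ | ∃ α ∈ Φ, x = (addOrderOf (Q α) : ℤ) • α},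
       Q x = 0) ∧
    (∀ l m : Λ, (∀ μ : Λ, b l μ = 0) → (∀ μ : Λ, b m μ = 0) →
       l - m ∈ AddSubgroup.closure {x : Λ | ∃ α ∈ Φ, x = (addOrderOf (Q α) : ℤ) • α} →
       Q l = Q m) ∧
    (∀ l m : Λ, (∀ μ : Λ, b l μ = 0) → (∀ μ : Λ, b m μ = 0) →
       Q (l + m) = Q l + Q m) := by
  have hclosure : AddSubgroup.closure {x : Λ | ∃ α ∈ Φ, x = (addOrderOf (Q α) : ℤ) • α} ≤
      isotropicRadical hQ hb hbadd := by
    rw [AddSubgroup.closure_le]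
    rintro _ ⟨α, hα, rfl⟩
    exact addOrderOf_zsmul_mem_isotropicRadical hQ hb hbadd (hstrict α hα)
  refine ⟨fun x hx => (hclosure hx).1, fun l m _ _ hlm => ?_, fun l m hl _ =>
    map_add_of_polar_eq_zero hb (hl m)⟩
  obtain ⟨hQlm, hblm⟩ := hclosure hlm
  rw [← sub_add_cancel l m, map_add_of_polar_eq_zero hb (hblm m), hQlm, zero_add]

/-- Under strict invariance `b(α,λ) = ⟨α̌,λ⟩ • Q(α)`, the quadratic form `Q`
vanishes on the subgroup `Λ^{♯,r}` generated by the elements `n_α • α` (with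
`n_α = ord(Q α)`), and therefore the restriction of `Q` to `Λ^♯` descends to a well-defined
group homomorphism `Λ^♯/Λ^{♯,r} → A` (well-definedness and additivity are stated
explicitly). -/
theorem stmt2 {Λ A : Type*} [AddCommGroup Λ] [AddCommGroup A] [Finite A]
    [Module.Free ℤ Λ] [Module.Finite ℤ Λ]
    (Q : Λ → A)
    (hQ : ∀ (n : ℤ) (l : Λ), Q (n • l) = n ^ 2 • Q l)
    (b : Λ → Λ → A)
    (hb : ∀ l m : Λ, b l m = Q (l + m) - Q l - Q m)
    (hbadd : ∀ l₁ l₂ m : Λ, b (l₁ + l₂) m = b l₁ m + b l₂ m)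
    (hbadd' : ∀ l m₁ m₂ : Λ, b l (m₁ + m₂) = b l m₁ + b l m₂)
    (Φ : Set Λ) (d : Λ → Λ →+ ℤ)
    (hpair : ∀ α ∈ Φ, d α α = 2)
    (hstrict : ∀ α ∈ Φ, ∀ l : Λ, b α l = d α l • Q α) :
    (∀ x ∈ AddSubgroup.closure {x : Λ | ∃ α ∈ Φ, x = (addOrderOf (Q α) : ℤ) • α},
       Q x = 0) ∧
    (∀ l m : Λ, (∀ μ : Λ, b l μ = 0) → (∀ μ : Λ, b m μ = 0) →
       l - m ∈ AddSubgroup.closure {x : Λ | ∃ α ∈ Φ, x = (addOrderOf (Q α) : ℤ) • α} →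
       Q l = Q m) ∧
    (∀ l m : Λ, (∀ μ : Λ, b l μ = 0) → (∀ μ : Λ, b m μ = 0) →
       Q (l + m) = Q l + Q m) :=
  stmt2_general Q hQ b hb hbadd Φ d hstrict
end

section
/- Under the strict invariance condition, for any two coroots α and β one has the symmetry relation ⟨α̌,β⟩·Q(α) = ⟨β̌,α⟩·Q(β) in A, and consequently n_α divides n_β·⟨α̌,β⟩. In particular the 'sharp Cartan integers' ⟨α̌^♯, β^♯⟩ := (n_β/n_α)·⟨α̌,β⟩ are integers, where α^♯ = n_α·α and α̌^♯ = α̌/n_α. -/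
theorem polarization_comm {Λ A : Type*} [AddCommGroup Λ] [AddCommGroup A] {Q : Λ → A}
    {b : Λ → Λ → A} (hb : ∀ l m : Λ, b l m = Q (l + m) - Q l - Q m) (l m : Λ) :
    b l m = b m l := by
  rw [hb, hb, add_comm, sub_right_comm]

theorem addOrderOf_dvd_addOrderOf_mul_of_zsmul_eq {A : Type*} [AddCommGroup A] {x y : A}
    {m k : ℤ} (h : m • x = k • y) : (addOrderOf x : ℤ) ∣ (addOrderOf y : ℤ) * m := by
  rw [addOrderOf_dvd_iff_zsmul_eq_zero, mul_smul, h, smul_comm, natCast_zsmul,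
    addOrderOf_nsmul_eq_zero, smul_zero]

theorem stmt4_general {Λ A : Type*} [AddCommGroup Λ] [AddCommGroup A]
    (Q : Λ → A)
    (b : Λ → Λ → A)
    (hb : ∀ l m : Λ, b l m = Q (l + m) - Q l - Q m)
    (Φ : Set Λ) (d : Λ → Λ →+ ℤ)
    (hstrict : ∀ α ∈ Φ, ∀ l : Λ, b α l = d α l • Q α) :
    ∀ α ∈ Φ, ∀ β ∈ Φ,
      d α β • Q α = d β α • Q β ∧
      (addOrderOf (Q α) : ℤ) ∣ (addOrderOf (Q β) : ℤ) * d α β := by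
  intro α hα β hβ
  have hsymm : d α β • Q α = d β α • Q β := by
    rw [← hstrict α hα β, ← hstrict β hβ α, polarization_comm hb]
  exact ⟨hsymm, addOrderOf_dvd_addOrderOf_mul_of_zsmul_eq hsymm⟩

/-- Under strict invariance, for any two coroots `α` and `β` one has the
symmetry relation `⟨α̌,β⟩ • Q(α) = ⟨β̌,α⟩ • Q(β)` in `A`, and consequently `n_α` divides
`n_β • ⟨α̌,β⟩`, so the "sharp Cartan integers" `(n_β / n_α) • ⟨α̌,β⟩` are integers (where
`n_α = ord(Q α)`). -/
theorem stmt4 {Λ A : Type*} [AddCommGroup Λ] [AddCommGroup A] [Finite A]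
    [Module.Free ℤ Λ] [Module.Finite ℤ Λ]
    (Q : Λ → A)
    (hQ : ∀ (n : ℤ) (l : Λ), Q (n • l) = n ^ 2 • Q l)
    (b : Λ → Λ → A)
    (hb : ∀ l m : Λ, b l m = Q (l + m) - Q l - Q m)
    (hbadd : ∀ l₁ l₂ m : Λ, b (l₁ + l₂) m = b l₁ m + b l₂ m)
    (hbadd' : ∀ l m₁ m₂ : Λ, b l (m₁ + m₂) = b l m₁ + b l m₂)
    (Φ : Set Λ) (d : Λ → Λ →+ ℤ)
    (hpair : ∀ α ∈ Φ, d α α = 2)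
    (hstrict : ∀ α ∈ Φ, ∀ l : Λ, b α l = d α l • Q α) :
    ∀ α ∈ Φ, ∀ β ∈ Φ,
      d α β • Q α = d β α • Q β ∧
      (addOrderOf (Q α) : ℤ) ∣ (addOrderOf (Q β) : ℤ) * d α β :=
  stmt4_general Q b hb Φ d hstrict
end

section
/- Let Λ be a lattice with a finite reduced crystallographic root datum (Φ, α ↦ α̌) and let Q be an A-valued Weyl-invariant quadratic form with bilinear form b satisfying strict invariance b(α,λ) = ⟨α̌,λ⟩·Q(α). Then the data Λ^♯ (kernel of b), Φ^♯ := {n_α α : α ∈ Φ} ⊆ Λ^♯, and the duals (α^♯)̌ := α̌/n_α ∈ Hom(Λ^♯,ℤ) form a root datum: ⟨α̌^♯, α^♯⟩ = 2, the reflections λ ↦ λ − ⟨α̌^♯,λ⟩α^♯ preserve Λ^♯ and permute Φ^♯, and the dual reflections permute {α̌^♯}. -/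
/-! Strict invariance gives `b (k • α) = ⟨α̌, ·⟩ • (k • Q α)`, which vanishes once `n_α ∣ k`,
so these multiples of `α` lie in the radical of `b`. Conversely, for `λ` in the radical,
symmetry of `b` gives `⟨α̌, λ⟩ • Q α = b α λ = b λ α = 0`, i.e. `n_α ∣ ⟨α̌, λ⟩`.
Weyl invariance of `Q` gives `n_{s_α β} = n_β`, so `s_α` maps `n_β • β` to `n_{s_α β} • s_α β`. -/

section LeftRadical

variable {Λ A : Type*} [AddCommGroup Λ] [AddCommGroup A]
  (b : Λ → Λ → A) (hbadd : ∀ l₁ l₂ m : Λ, b (l₁ + l₂) m = b l₁ m + b l₂ m)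

def leftHom (m : Λ) : Λ →+ A :=
  AddMonoidHom.mk' (b · m) (hbadd · · m)

def leftRadical : AddSubgroup Λ :=
  ⨅ m, (leftHom b hbadd m).ker

variable {b hbadd}

theorem mem_leftRadical {l : Λ} : l ∈ leftRadical b hbadd ↔ ∀ m, b l m = 0 := by
  simp [leftRadical, AddSubgroup.mem_iInf, leftHom]

variable {Q : Λ → A} {d : Λ → Λ →+ ℤ}

theorem zsmul_mem_leftRadical_of_dvd {α : Λ} (hα : ∀ l, b α l = d α l • Q α) {k : ℤ}
    (hk : (addOrderOf (Q α) : ℤ) ∣ k) : k • α ∈ leftRadical b hbadd := by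
  refine mem_leftRadical.mpr fun m => ?_
  have hlin : b (k • α) m = k • b α m := map_zsmul (leftHom b hbadd m) k α
  rw [hlin, hα, smul_comm, addOrderOf_dvd_iff_zsmul_eq_zero.mp hk, smul_zero]

theorem addOrderOf_dvd_of_mem_leftRadical (hsymm : ∀ l m, b l m = b m l) {α : Λ}
    (hα : ∀ l, b α l = d α l • Q α) {l : Λ} (hl : l ∈ leftRadical b hbadd) :
    (addOrderOf (Q α) : ℤ) ∣ d α l := by
  rw [addOrderOf_dvd_iff_zsmul_eq_zero, ← hα, hsymm, mem_leftRadical.mp hl]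

end LeftRadical

theorem zsmul_sub_map_zsmul_smul {Λ : Type*} [AddCommGroup Λ] (f : Λ →+ ℤ) (n : ℤ) (α β : Λ) :
    n • β - f (n • β) • α = n • (β - f β • α) := by
  rw [map_zsmul, smul_sub, smul_eq_mul, mul_smul]

theorem stmt10_general {Λ A : Type*} [AddCommGroup Λ] [AddCommGroup A]
    (Q : Λ → A)
    (b : Λ → Λ → A)
    (hb : ∀ l m : Λ, b l m = Q (l + m) - Q l - Q m)
    (hbadd : ∀ l₁ l₂ m : Λ, b (l₁ + l₂) m = b l₁ m + b l₂ m)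
    (Φ : Set Λ) (d : Λ → Λ →+ ℤ)
    (hpair : ∀ α ∈ Φ, d α α = 2)
    (hstab : ∀ α ∈ Φ, ∀ β ∈ Φ, α - d β α • β ∈ Φ)
    (hdualrefl : ∀ α ∈ Φ, ∀ β ∈ Φ, d (α - d β α • β) = d α - d α β • d β)
    (hQW : ∀ α ∈ Φ, ∀ l : Λ, Q (l - d α l • α) = Q l)
    (hstrict : ∀ α ∈ Φ, ∀ l : Λ, b α l = d α l • Q α) :
    -- Φ^♯ is contained in Λ^♯
    (∀ α ∈ Φ, ∀ m : Λ, b ((addOrderOf (Q α) : ℤ) • α) m = 0) ∧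
    -- ⟨α̌^♯, α^♯⟩ = 2, i.e. ⟨α̌, n_α • α⟩ = 2 n_α
    (∀ α ∈ Φ, d α ((addOrderOf (Q α) : ℤ) • α) = 2 * (addOrderOf (Q α) : ℤ)) ∧
    -- the sharp reflections have integral pairings on Λ^♯ and preserve Λ^♯
    (∀ α ∈ Φ, ∀ l : Λ, (∀ μ : Λ, b l μ = 0) →
       (addOrderOf (Q α) : ℤ) ∣ d α l ∧ ∀ μ : Λ, b (l - d α l • α) μ = 0) ∧
    -- the sharp reflections permute Φ^♯
    (∀ α ∈ Φ, ∀ β ∈ Φ,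
       (addOrderOf (Q α) : ℤ) ∣ d α ((addOrderOf (Q β) : ℤ) • β) ∧
       ∃ γ ∈ Φ, ((addOrderOf (Q β) : ℤ) • β) - d α ((addOrderOf (Q β) : ℤ) • β) • α =
         (addOrderOf (Q γ) : ℤ) • γ) ∧
    -- the dual reflections permute the duals α̌^♯
    (∀ α ∈ Φ, ∀ β ∈ Φ, ∃ γ ∈ Φ,
       addOrderOf (Q γ) = addOrderOf (Q β) ∧ d γ = d β - d β α • d α) := by
  have hsymm : ∀ l m, b l m = b m l := fun l m => by
    rw [hb, hb]
    exact QuadraticMap.polar_comm Q l m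
  have sharp_mem : ∀ α ∈ Φ, (addOrderOf (Q α) : ℤ) • α ∈ leftRadical b hbadd :=
    fun α hα => zsmul_mem_leftRadical_of_dvd (hstrict α hα) dvd_rfl
  refine ⟨fun α hα => mem_leftRadical.mp (sharp_mem α hα), fun α hα => ?_, ?_, ?_, ?_⟩
  · rw [map_zsmul, hpair α hα, smul_eq_mul, mul_comm]
  · intro α hα l hl
    have hl' : l ∈ leftRadical b hbadd := mem_leftRadical.mpr hl
    have hdvd := addOrderOf_dvd_of_mem_leftRadical hsymm (hstrict α hα) hl'
    exact ⟨hdvd, mem_leftRadical.mp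
      (sub_mem hl' (zsmul_mem_leftRadical_of_dvd (hstrict α hα) hdvd))⟩
  · intro α hα β hβ
    refine ⟨addOrderOf_dvd_of_mem_leftRadical hsymm (hstrict α hα) (sharp_mem β hβ),
      β - d α β • α, hstab β hβ α hα, ?_⟩
    rw [hQW α hα β, zsmul_sub_map_zsmul_smul]
  · intro α hα β hβ
    exact ⟨β - d α β • α, hstab β hβ α hα, by rw [hQW α hα β], hdualrefl β hβ α hα⟩

/-- Let `Λ` be a lattice with a finite reduced crystallographic root datum
`(Φ, α ↦ α̌)` and let `Q` be an `A`-valued Weyl-invariant quadratic form with bilinear form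
`b` satisfying strict invariance `b(α,λ) = ⟨α̌,λ⟩ • Q(α)`.  Then the data `Λ^♯ = ker b`,
`Φ^♯ = {n_α • α : α ∈ Φ} ⊆ Λ^♯`, and duals `α̌^♯ = α̌ / n_α` form a root datum:
`⟨α̌^♯, α^♯⟩ = 2`, the sharp reflections preserve `Λ^♯` (with integral pairings) and permute
`Φ^♯`, and the dual reflections permute the `α̌^♯`. -/
theorem stmt10 {Λ A : Type*} [AddCommGroup Λ] [AddCommGroup A] [Finite A]
    [Module.Free ℤ Λ] [Module.Finite ℤ Λ]
    (Q : Λ → A)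
    (hQ : ∀ (n : ℤ) (l : Λ), Q (n • l) = n ^ 2 • Q l)
    (b : Λ → Λ → A)
    (hb : ∀ l m : Λ, b l m = Q (l + m) - Q l - Q m)
    (hbadd : ∀ l₁ l₂ m : Λ, b (l₁ + l₂) m = b l₁ m + b l₂ m)
    (hbadd' : ∀ l m₁ m₂ : Λ, b l (m₁ + m₂) = b l m₁ + b l m₂)
    (Φ : Set Λ) (hΦfin : Φ.Finite) (d : Λ → Λ →+ ℤ)
    (hinj : Set.InjOn d Φ)
    (hpair : ∀ α ∈ Φ, d α α = 2)
    (hstab : ∀ α ∈ Φ, ∀ β ∈ Φ, α - d β α • β ∈ Φ)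
    (hdualrefl : ∀ α ∈ Φ, ∀ β ∈ Φ, d (α - d β α • β) = d α - d α β • d β)
    (hQW : ∀ α ∈ Φ, ∀ l : Λ, Q (l - d α l • α) = Q l)
    (hstrict : ∀ α ∈ Φ, ∀ l : Λ, b α l = d α l • Q α) :
    -- Φ^♯ is contained in Λ^♯
    (∀ α ∈ Φ, ∀ m : Λ, b ((addOrderOf (Q α) : ℤ) • α) m = 0) ∧
    -- ⟨α̌^♯, α^♯⟩ = 2, i.e. ⟨α̌, n_α • α⟩ = 2 n_α
    (∀ α ∈ Φ, d α ((addOrderOf (Q α) : ℤ) • α) = 2 * (addOrderOf (Q α) : ℤ)) ∧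
    -- the sharp reflections have integral pairings on Λ^♯ and preserve Λ^♯
    (∀ α ∈ Φ, ∀ l : Λ, (∀ μ : Λ, b l μ = 0) →
       (addOrderOf (Q α) : ℤ) ∣ d α l ∧ ∀ μ : Λ, b (l - d α l • α) μ = 0) ∧
    -- the sharp reflections permute Φ^♯
    (∀ α ∈ Φ, ∀ β ∈ Φ,
       (addOrderOf (Q α) : ℤ) ∣ d α ((addOrderOf (Q β) : ℤ) • β) ∧
       ∃ γ ∈ Φ, ((addOrderOf (Q β) : ℤ) • β) - d α ((addOrderOf (Q β) : ℤ) • β) • α =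
         (addOrderOf (Q γ) : ℤ) • γ) ∧
    -- the dual reflections permute the duals α̌^♯
    (∀ α ∈ Φ, ∀ β ∈ Φ, ∃ γ ∈ Φ,
       addOrderOf (Q γ) = addOrderOf (Q β) ∧ d γ = d β - d β α • d α) :=
  stmt10_general Q b hb hbadd Φ d hpair hstab hdualrefl hQW hstrict
end

section
/- Let C be a symmetric monoidal category in which every object is invertible (a Picard groupoid). For an object x, let ε(x) ∈ Aut(𝟙) denote the automorphism of the unit obtained by transporting the symmetry isomorphism β_{x,x} : x ⊗ x → x ⊗ x along an inverse of x ⊗ x. Then ε(x) is independent of choices, ε(x ⊗ y) = ε(x) ∘ ε(y) for all x, y, and ε(x) ∘ ε(x) = id. In other words, ε defines a group homomorphism from the group of isomorphism classes of objects of C to the 2-torsion subgroup of Aut(𝟙). -/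
/-!
Every endomorphism `s` of `𝟙` acts on each object `a` by `λ⁻¹ ≫ s ▷ a ≫ λ`. These scalars are
natural in `a` and compatible with `⊗`, and when `a` is invertible, `- ⊗ a` is an equivalence, so
every endomorphism of `a` is a unique scalar. Then `ε x` is the scalar representing `β_{x,x}`.
Since `tensorμ` intertwines `β_{x,x} ⊗ β_{y,y}` with `β_{x⊗y,x⊗y}` and scalars commute with all
morphisms, `ε` is multiplicative; and `ε x ≫ ε x` represents `β_{x,x} ≫ β_{x,x} = 𝟙`.
-/

open CategoryTheory MonoidalCategory BraidedCategory

namespace CategoryTheory.MonoidalCategory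

variable {C : Type*} [Category C] [MonoidalCategory C]

def unitScalar (s : 𝟙_ C ⟶ 𝟙_ C) (a : C) : a ⟶ a :=
  (λ_ a).inv ≫ s ▷ a ≫ (λ_ a).hom

lemma unitScalar_naturality (s : 𝟙_ C ⟶ 𝟙_ C) {a b : C} (f : a ⟶ b) :
    f ≫ unitScalar s b = unitScalar s a ≫ f := by
  simp only [unitScalar, Category.assoc]
  rw [← leftUnitor_naturality, ← whisker_exchange_assoc, ← leftUnitor_inv_naturality_assoc]

lemma unitScalar_comp (s t : 𝟙_ C ⟶ 𝟙_ C) (a : C) :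
    unitScalar s a ≫ unitScalar t a = unitScalar (s ≫ t) a := by
  simp [unitScalar]

lemma unitScalar_id (a : C) : unitScalar (𝟙 (𝟙_ C)) a = 𝟙 a := by
  simp [unitScalar]

lemma unitScalar_whiskerRight (s : 𝟙_ C ⟶ 𝟙_ C) (a b : C) :
    unitScalar s a ▷ b = unitScalar s (a ⊗ b) := by
  simp [unitScalar, whiskerRight_tensor]

section Braided

variable [BraidedCategory C]

lemma unitScalar_eq_rightUnitor (s : 𝟙_ C ⟶ 𝟙_ C) (a : C) :
    unitScalar s a = (ρ_ a).inv ≫ a ◁ s ≫ (ρ_ a).hom := by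
  have h := braiding_naturality_left s a
  rw [braiding_tensorUnit_left, Category.assoc] at h
  rw [unitScalar, ← cancel_epi (λ_ a).hom, ← cancel_mono (λ_ a).inv]
  simp only [Iso.hom_inv_id_assoc, Category.assoc, Iso.hom_inv_id, Category.comp_id]
  rw [← reassoc_of% h]
  simp

lemma whiskerLeft_unitScalar (s : 𝟙_ C ⟶ 𝟙_ C) (a b : C) :
    b ◁ unitScalar s a = unitScalar s (b ⊗ a) := by
  simp [unitScalar_eq_rightUnitor, tensor_whiskerLeft]

lemma tensorHom_unitScalar (s t : 𝟙_ C ⟶ 𝟙_ C) (a b : C) :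
    unitScalar s a ⊗ₘ unitScalar t b = unitScalar (t ≫ s) (a ⊗ b) := by
  rw [tensorHom_def', whiskerLeft_unitScalar, unitScalar_whiskerRight, unitScalar_comp]

noncomputable def tensorRightEquivOfIsoUnit {a b : C} (e : a ⊗ b ≅ 𝟙_ C) : C ≌ C :=
  Equivalence.mk (tensorRight a) (tensorRight b)
    ((rightUnitorNatIso C).symm ≪≫ (tensoringRight C).mapIso e.symm ≪≫ tensorRightTensor a b)
    ((tensorRightTensor b a).symm ≪≫ (tensoringRight C).mapIso (β_ b a ≪≫ e) ≪≫
      rightUnitorNatIso C)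

lemma unitScalar_bijective {a b : C} (e : a ⊗ b ≅ 𝟙_ C) :
    Function.Bijective (unitScalar · a) := by
  have hconj : (unitScalar · a) = (λ_ a).conj ∘ ((tensorRight a).map : End (𝟙_ C) → _) := by
    funext s
    rfl
  rw [hconj]
  exact (λ_ a).conj.bijective.comp
    ((tensorRightEquivOfIsoUnit e).fullyFaithfulFunctor.map_bijective _ _)

end Braided

section Symmetric

variable [SymmetricCategory C]

lemma braiding_tensor_self_eq_unitScalar {x y : C} {s t : 𝟙_ C ⟶ 𝟙_ C}
    (hx : (β_ x x).hom = unitScalar s (x ⊗ x)) (hy : (β_ y y).hom = unitScalar t (y ⊗ y)) :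
    (β_ (x ⊗ y) (x ⊗ y)).hom = unitScalar (t ≫ s) ((x ⊗ y) ⊗ (x ⊗ y)) := by
  have : IsIso (tensorμ x x y y) := ⟨tensorδ x x y y, by simp, by simp⟩
  rw [← cancel_epi (tensorμ x x y y), SymmetricCategory.tensorμ_braid_swap, hx, hy,
    tensorHom_unitScalar, unitScalar_naturality]

lemma unitScalar_comp_self_eq_id {x : C} {s : 𝟙_ C ⟶ 𝟙_ C}
    (hx : (β_ x x).hom = unitScalar s (x ⊗ x)) :
    unitScalar (s ≫ s) (x ⊗ x) = unitScalar (𝟙 _) (x ⊗ x) := by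
  rw [← unitScalar_comp, ← hx, SymmetricCategory.symmetry, unitScalar_id]

end Symmetric

end CategoryTheory.MonoidalCategory

/-- Let `C` be a symmetric monoidal category in which every object is
invertible (a Picard groupoid).  For an object `x`, let `ε(x) ∈ Aut(𝟙)` be the automorphism
of the unit obtained by transporting the symmetry `β_{x,x} : x ⊗ x ≅ x ⊗ x` along an inverse
of `x ⊗ x`; equivalently, `ε(x)` is the unique automorphism of `𝟙` whose left-tensor action
on `x ⊗ x` equals `β_{x,x}`.  Then `ε(x)` is independent of choices (uniqueness),
`ε(x ⊗ y) = ε(x) ∘ ε(y)`, and `ε(x) ∘ ε(x) = id`; i.e. `ε` is a homomorphism from the group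
of isomorphism classes of objects of `C` to the `2`-torsion of `Aut(𝟙)`. -/
theorem stmt16 {C : Type*} [Groupoid C] [MonoidalCategory C] [SymmetricCategory C]
    (hinv : ∀ x : C, ∃ y : C, Nonempty ((x ⊗ y) ≅ 𝟙_ C)) :
    ∃ ε : C → Aut (𝟙_ C),
      (∀ x : C, (β_ x x).hom =
        (λ_ (x ⊗ x)).inv ≫ ((ε x).hom ▷ (x ⊗ x)) ≫ (λ_ (x ⊗ x)).hom) ∧
      (∀ (x : C) (θ : Aut (𝟙_ C)),
        (β_ x x).hom =
          (λ_ (x ⊗ x)).inv ≫ (θ.hom ▷ (x ⊗ x)) ≫ (λ_ (x ⊗ x)).hom → θ = ε x) ∧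
      (∀ x y : C, ε (x ⊗ y) = ε x * ε y) ∧
      (∀ x : C, ε x * ε x = 1) := by
  have bij (a : C) : Function.Bijective (unitScalar · a) :=
    unitScalar_bijective (hinv a).choose_spec.some
  choose s hs using fun x : C => (bij (x ⊗ x)).2 (β_ x x).hom
  have hss (x : C) : s x ≫ s x = 𝟙 _ := (bij _).1 (unitScalar_comp_self_eq_id (hs x).symm)
  refine ⟨fun x => ⟨s x, s x, hss x, hss x⟩, fun x => (hs x).symm, ?_, ?_,
    fun x => Iso.ext (hss x)⟩
  · exact fun x θ hθ => Iso.ext ((bij _).1 (hθ.symm.trans (hs x).symm))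
  · exact fun x y => Iso.ext ((bij _).1
      ((hs _).trans (braiding_tensor_self_eq_unitScalar (hs x).symm (hs y).symm)))
end
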